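/- If ∑_{k=0}^{∞} a_k converges to S (in the ordinary sense), then lim_{n→∞} ∑_{k=0}^{n} χ_n(k)·a_k = S. That is, the χ summability method is regular. -/
import Mathlib


noncomputable def chi (n k : ℕ) : ℝ := ∏ j ∈ Finset.range k, (1 - (j : ℝ) / n)

open Filter Finset

lemma chi_nonneg {n k : ℕ} (hk : k ≤ n + 1) : 0 ≤ chi n k := by
  apply Finset.prod_nonneg
  intro j hj
  rw [Finset.mem_range] at hj
  have hj' : (j : ℝ) / n ≤ 1 := by
    rcases Nat.eq_zero_or_pos n with hn | hn
    · simp [hn]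
    · rw [div_le_one (by exact_mod_cast hn)]
      exact_mod_cast (by omega : j ≤ n)
  linarith

lemma chi_le_one {n k : ℕ} (hk : k ≤ n + 1) : chi n k ≤ 1 := by
  apply Finset.prod_le_one
  · intro j hj
    rw [Finset.mem_range] at hj
    have hj' : (j : ℝ) / n ≤ 1 := by
      rcases Nat.eq_zero_or_pos n with hn | hn
      · simp [hn]
      · rw [div_le_one (by exact_mod_cast hn)]
        exact_mod_cast (by omega : j ≤ n)
    linarith
  · intro j hj
    have : (0:ℝ) ≤ (j : ℝ) / n := by positivity
    linarith

lemma chi_succ (n k : ℕ) : chi n (k + 1) = chi n k * (1 - (k : ℝ) / n) := by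
  rw [chi, chi, Finset.prod_range_succ]

lemma chi_diff (n k : ℕ) : chi n k - chi n (k + 1) = chi n k * ((k : ℝ) / n) := by
  rw [chi_succ]; ring

lemma chi_top {n : ℕ} (hn : 1 ≤ n) : chi n (n + 1) = 0 := by
  apply Finset.prod_eq_zero (Finset.self_mem_range_succ n)
  rw [div_self (by exact_mod_cast Nat.one_le_iff_ne_zero.mp hn : (n:ℝ) ≠ 0)]
  ring

lemma chi_sum_diff {n : ℕ} (hn : 1 ≤ n) :
    ∑ k ∈ Finset.range (n + 1), (chi n k - chi n (k + 1)) = 1 := by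
  rw [Finset.sum_range_sub' (fun k => chi n k), chi_top hn, chi]
  simp

/-- The χ summability method is regular. -/
theorem chi_regular (a : ℕ → ℂ) (S : ℂ)
    (h : Filter.Tendsto (fun N => ∑ k ∈ Finset.range N, a k) Filter.atTop (nhds S)) :
    Filter.Tendsto (fun n : ℕ => ∑ k ∈ Finset.range (n + 1), (chi n k : ℂ) * a k)
      Filter.atTop (nhds S) := by
  set s : ℕ → ℂ := fun m => ∑ k ∈ Finset.range m, a k with hs
  set d : ℕ → ℕ → ℝ := fun n k => chi n k - chi n (k + 1) with hd
  set t : ℕ → ℂ := fun k => s (k + 1) - S with ht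
  have ht0 : Tendsto t atTop (nhds 0) := by
    have := (h.comp (tendsto_add_atTop_nat 1)).sub_const S
    simpa [ht, Function.comp] using this
  have ha : ∀ k, a k = s (k + 1) - s k := by
    intro k
    simp [hs, Finset.sum_range_succ]
  -- the key identity, for n ≥ 1
  have hiden : ∀ n : ℕ, 1 ≤ n →
      ∑ k ∈ Finset.range (n + 1), (chi n k : ℂ) * a k
        = S + ∑ k ∈ Finset.range (n + 1), (d n k : ℂ) * t k := by
    intro n hn
    have tele : ∑ k ∈ Finset.range (n + 1),
        ((chi n (k+1) : ℂ) * s (k+1) - (chi n k : ℂ) * s k)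
        = (chi n (n+1) : ℂ) * s (n+1) - (chi n 0 : ℂ) * s 0 :=
      Finset.sum_range_sub (fun k => (chi n k : ℂ) * s k) (n+1)
    have hz : (chi n (n+1) : ℂ) * s (n+1) - (chi n 0 : ℂ) * s 0 = 0 := by
      simp [chi_top hn, hs]
    have step : ∀ k, (chi n k : ℂ) * a k
        = (d n k : ℂ) * s (k+1) + ((chi n (k+1) : ℂ) * s (k+1) - (chi n k : ℂ) * s k) := by
      intro k
      rw [ha k, hd]
      push_cast
      ring
    have hsum1 : ∑ k ∈ Finset.range (n + 1), (chi n k : ℂ) * a k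
        = ∑ k ∈ Finset.range (n + 1), (d n k : ℂ) * s (k+1) := by
      calc ∑ k ∈ Finset.range (n + 1), (chi n k : ℂ) * a k
          = ∑ k ∈ Finset.range (n + 1), ((d n k : ℂ) * s (k+1)
              + ((chi n (k+1) : ℂ) * s (k+1) - (chi n k : ℂ) * s k)) :=
            Finset.sum_congr rfl (fun k _ => step k)
        _ = ∑ k ∈ Finset.range (n + 1), (d n k : ℂ) * s (k+1)
              + ∑ k ∈ Finset.range (n + 1),
                ((chi n (k+1) : ℂ) * s (k+1) - (chi n k : ℂ) * s k) := by
            rw [Finset.sum_add_distrib]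
        _ = ∑ k ∈ Finset.range (n + 1), (d n k : ℂ) * s (k+1) := by
            rw [tele, hz, add_zero]
    have hdsum : ∑ k ∈ Finset.range (n + 1), (d n k : ℂ) = 1 := by
      rw [← Complex.ofReal_sum]
      norm_cast
      exact chi_sum_diff hn
    rw [hsum1]
    have : ∀ k, (d n k : ℂ) * s (k+1) = (d n k : ℂ) * t k + (d n k : ℂ) * S := by
      intro k; rw [ht]; ring
    rw [Finset.sum_congr rfl (fun k _ => this k), Finset.sum_add_distrib,
      ← Finset.sum_mul, hdsum, one_mul, add_comm]
  -- facts about d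
  have hd_eq : ∀ n k, d n k = chi n k * ((k : ℝ) / n) := fun n k => chi_diff n k
  have hd_nonneg : ∀ n k, k ≤ n → 0 ≤ d n k := by
    intro n k hk
    rw [hd_eq]
    exact mul_nonneg (chi_nonneg (by omega)) (by positivity)
  have hd_le : ∀ n k, k ≤ n → d n k ≤ (k : ℝ) / n := by
    intro n k hk
    rw [hd_eq]
    calc chi n k * ((k : ℝ) / n) ≤ 1 * ((k : ℝ) / n) := by
          apply mul_le_mul_of_nonneg_right (chi_le_one (by omega)) (by positivity)
      _ = (k : ℝ) / n := one_mul _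
  -- the error term tends to zero
  have key : Tendsto (fun n : ℕ => ∑ k ∈ Finset.range (n + 1), (d n k : ℂ) * t k)
      atTop (nhds 0) := by
    rw [NormedAddCommGroup.tendsto_nhds_zero]
    intro ε hε
    obtain ⟨K, hK⟩ : ∃ K : ℕ, ∀ k, K ≤ k → ‖t k‖ < ε / 4 := by
      have := (NormedAddCommGroup.tendsto_nhds_zero.mp ht0) (ε / 4) (by linarith)
      exact eventually_atTop.mp this
    set M : ℝ := ∑ k ∈ Finset.range K, ‖t k‖ with hM
    have hM0 : 0 ≤ M := Finset.sum_nonneg fun k _ => norm_nonneg _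
    have hlim : Tendsto (fun n : ℕ => (K : ℝ) * M / n) atTop (nhds 0) :=
      tendsto_const_div_atTop_nhds_zero_nat _
    have hsmall : ∀ᶠ n : ℕ in atTop, (K : ℝ) * M / n < ε / 2 := by
      have := hlim.eventually (eventually_lt_nhds (by linarith : (0:ℝ) < ε / 2))
      exact this
    filter_upwards [hsmall, eventually_ge_atTop K, eventually_ge_atTop 1] with n hn1 hnK hn2
    have hsplit : ∑ k ∈ Finset.range (n + 1), (d n k : ℂ) * t k
        = ∑ k ∈ Finset.range K, (d n k : ℂ) * t k
          + ∑ k ∈ Finset.Ico K (n + 1), (d n k : ℂ) * t k :=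
      (Finset.sum_range_add_sum_Ico _ (by omega)).symm
    have hdsum1 : ∑ k ∈ Finset.range (n + 1), d n k = 1 := chi_sum_diff hn2
    have bound1 : ‖∑ k ∈ Finset.range K, (d n k : ℂ) * t k‖ ≤ (K : ℝ) * M / n := by
      calc ‖∑ k ∈ Finset.range K, (d n k : ℂ) * t k‖
          ≤ ∑ k ∈ Finset.range K, ‖(d n k : ℂ) * t k‖ := norm_sum_le _ _
        _ ≤ ∑ k ∈ Finset.range K, ((K : ℝ) / n) * ‖t k‖ := by
            apply Finset.sum_le_sum
            intro k hk
            rw [Finset.mem_range] at hk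
            rw [norm_mul, Complex.norm_real, Real.norm_eq_abs,
              abs_of_nonneg (hd_nonneg n k (by omega))]
            apply mul_le_mul_of_nonneg_right _ (norm_nonneg _)
            calc d n k ≤ (k : ℝ) / n := hd_le n k (by omega)
              _ ≤ (K : ℝ) / n := by
                  gcongr
        _ = (K : ℝ) / n * M := by rw [← Finset.mul_sum]
        _ = (K : ℝ) * M / n := by ring
    have bound2 : ‖∑ k ∈ Finset.Ico K (n + 1), (d n k : ℂ) * t k‖ ≤ ε / 4 := by
      calc ‖∑ k ∈ Finset.Ico K (n + 1), (d n k : ℂ) * t k‖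
          ≤ ∑ k ∈ Finset.Ico K (n + 1), ‖(d n k : ℂ) * t k‖ := norm_sum_le _ _
        _ ≤ ∑ k ∈ Finset.Ico K (n + 1), d n k * (ε / 4) := by
            apply Finset.sum_le_sum
            intro k hk
            rw [Finset.mem_Ico] at hk
            rw [norm_mul, Complex.norm_real, Real.norm_eq_abs,
              abs_of_nonneg (hd_nonneg n k (by omega))]
            exact mul_le_mul_of_nonneg_left (hK k hk.1).le (hd_nonneg n k (by omega))
        _ = (∑ k ∈ Finset.Ico K (n + 1), d n k) * (ε / 4) := by rw [Finset.sum_mul]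
        _ ≤ 1 * (ε / 4) := by
            apply mul_le_mul_of_nonneg_right _ (by linarith)
            rw [← hdsum1]
            apply Finset.sum_le_sum_of_subset_of_nonneg
            · intro x hx
              rw [Finset.mem_Ico] at hx
              rw [Finset.mem_range]
              omega
            · intro k hk _
              rw [Finset.mem_range] at hk
              exact hd_nonneg n k (by omega)
        _ = ε / 4 := one_mul _
    calc ‖∑ k ∈ Finset.range (n + 1), (d n k : ℂ) * t k‖
        ≤ ‖∑ k ∈ Finset.range K, (d n k : ℂ) * t k‖
          + ‖∑ k ∈ Finset.Ico K (n + 1), (d n k : ℂ) * t k‖ := by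
          rw [hsplit]; exact norm_add_le _ _
      _ ≤ (K : ℝ) * M / n + ε / 4 := add_le_add bound1 bound2
      _ < ε / 2 + ε / 4 := by linarith
      _ < ε := by linarith
  have final : Tendsto (fun n : ℕ => S + ∑ k ∈ Finset.range (n + 1), (d n k : ℂ) * t k)
      atTop (nhds S) := by
    have := key.const_add S
    simpa using this
  apply final.congr'
  filter_upwards [eventually_ge_atTop 1] with n hn
  exact (hiden n hn).symm
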